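/- Let 𝔬 be a complete discrete valuation ring with finite residue field, ℓ ≥ 1, 𝔬_ℓ = 𝔬/𝔭^ℓ. Let A₁ ∈ Mat_{d₁}(𝔬_ℓ), A₂ ∈ Mat_{d₂}(𝔬_ℓ) be matrices whose reductions modulo the maximal ideal have coprime characteristic polynomials over the residue field. Then for every C ∈ Mat_{d₂×d₁}(𝔬_ℓ) and every B ∈ Mat_{d₁×d₂}(𝔬_ℓ), the map Mat_{d₁×d₂}(𝔬_{ℓ−1}) → Mat_{d₁×d₂}(𝔬_{ℓ−1}), V ↦ V A₂ − A₁ V − π V C V (mod 𝔭^{ℓ−1}), is surjective; in particular there exists V with B + V A₂ − A₁ V − π V C V ≡ 0 (mod 𝔭^{ℓ−1}). -/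

import Mathlib

/-! If `V * A₂ = A₁ * V` then `V * p(A₂) = p(A₁) * V` for every polynomial `p`; when the
characteristic polynomials are coprime, `χ_{A₁}(A₂)` is invertible by Cayley–Hamilton while
`χ_{A₁}(A₁) = 0`, so `V = 0`. Hence the Sylvester operator `V ↦ V * A₂ - A₁ * V` is bijective over
the residue field, and by Nakayama it is surjective over the local ring.

For the quadratic equation one improves an approximate solution `V` whose error lies in `𝔪 ^ k`:
the error has a preimage `W` under the Sylvester operator with entries in `𝔪 ^ k`, and `V - W`
has error `π • (W * C * V + V * C * W - W * C * W)`, which lies in `𝔪 ^ (k + 1)`. -/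

open Matrix Polynomial

theorem Submodule.exists_mem_smul_top_apply_eq_of_surjective {R M N : Type*} [CommRing R]
    [AddCommGroup M] [Module R M] [AddCommGroup N] [Module R N] {f : M →ₗ[R] N}
    (hf : Function.Surjective f) {I : Ideal R} {y : N} (hy : y ∈ I • (⊤ : Submodule R N)) :
    ∃ x ∈ I • (⊤ : Submodule R M), f x = y := by
  rwa [← LinearMap.range_eq_top.mpr hf, ← Submodule.map_top, ← Submodule.map_smul'',
    Submodule.mem_map] at hy

namespace Matrix

variable {R : Type*} [CommRing R] {m n : Type*} [Fintype m] [Fintype n]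

theorem mem_ideal_smul_top_iff {I : Ideal R} {X : Matrix m n R} :
    X ∈ I • (⊤ : Submodule R (Matrix m n R)) ↔ ∀ i j, X i j ∈ I := by
  classical
  constructor
  · intro hX
    refine Submodule.smul_induction_on hX (fun r hr Y _ i j => ?_)
      fun Y Z hY hZ i j => I.add_mem (hY i j) (hZ i j)
    simpa using I.mul_mem_right (Y i j) hr
  · intro hX
    rw [matrix_eq_sum_single X]
    refine Submodule.sum_mem _ fun i _ => Submodule.sum_mem _ fun j _ => ?_
    simpa [smul_single] using
      Submodule.smul_mem_smul (hX i j) (Submodule.mem_top (x := (single i j 1 : Matrix m n R)))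

def sylvesterMap (A₁ : Matrix m m R) (A₂ : Matrix n n R) : Matrix m n R →ₗ[R] Matrix m n R :=
  mulRightLinearMap m R A₂ - mulLeftLinearMap n R A₁

@[simp]
theorem sylvesterMap_apply (A₁ : Matrix m m R) (A₂ : Matrix n n R) (V : Matrix m n R) :
    sylvesterMap A₁ A₂ V = V * A₂ - A₁ * V :=
  rfl

theorem map_sylvesterMap {S : Type*} [CommRing S] (f : R →+* S) (A₁ : Matrix m m R)
    (A₂ : Matrix n n R) (V : Matrix m n R) :
    (sylvesterMap A₁ A₂ V).map f = sylvesterMap (A₁.map f) (A₂.map f) (V.map f) := by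
  simp [Matrix.map_sub, Matrix.map_mul]

section Charpoly

variable [DecidableEq m] [DecidableEq n]

theorem mul_aeval_eq_aeval_mul {A₁ : Matrix m m R} {A₂ : Matrix n n R} {V : Matrix m n R}
    (h : V * A₂ = A₁ * V) (p : R[X]) : V * aeval A₂ p = aeval A₁ p * V := by
  induction p using Polynomial.induction_on' with
  | add p q hp hq => simp only [map_add, Matrix.mul_add, Matrix.add_mul, hp, hq]
  | monomial k a =>
    have hpow : V * A₂ ^ k = A₁ ^ k * V := by
      induction k with
      | zero => simp
      | succ k ih => rw [pow_succ, pow_succ, ← Matrix.mul_assoc, ih, Matrix.mul_assoc, h,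
          Matrix.mul_assoc]
    simp only [aeval_monomial, Algebra.algebraMap_eq_smul_one, Matrix.smul_mul,
      Matrix.mul_smul, Matrix.one_mul, hpow]

theorem eq_zero_of_mul_eq_mul_of_isCoprime_charpoly {A₁ : Matrix m m R} {A₂ : Matrix n n R}
    (hcop : IsCoprime A₁.charpoly A₂.charpoly) {V : Matrix m n R} (h : V * A₂ = A₁ * V) :
    V = 0 := by
  obtain ⟨a, b, hab⟩ := hcop
  have hinv : aeval A₂ A₁.charpoly * aeval A₂ a = 1 := by
    simpa [aeval_self_charpoly, mul_comm a] using congrArg (aeval A₂) hab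
  calc V = V * aeval A₂ A₁.charpoly * aeval A₂ a := by rw [Matrix.mul_assoc, hinv, Matrix.mul_one]
    _ = 0 := by rw [mul_aeval_eq_aeval_mul h, aeval_self_charpoly, Matrix.zero_mul, Matrix.zero_mul]

theorem sylvesterMap_injective {A₁ : Matrix m m R} {A₂ : Matrix n n R}
    (hcop : IsCoprime A₁.charpoly A₂.charpoly) : Function.Injective (sylvesterMap A₁ A₂) := by
  refine (injective_iff_map_eq_zero _).mpr fun V hV => ?_
  exact eq_zero_of_mul_eq_mul_of_isCoprime_charpoly hcop (sub_eq_zero.mp hV)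

theorem sylvesterMap_surjective_of_field {K : Type*} [Field K] {A₁ : Matrix m m K}
    {A₂ : Matrix n n K} (hcop : IsCoprime A₁.charpoly A₂.charpoly) :
    Function.Surjective (sylvesterMap A₁ A₂) :=
  LinearMap.injective_iff_surjective.mp (sylvesterMap_injective hcop)

open IsLocalRing in
theorem sylvesterMap_surjective [IsLocalRing R] {A₁ : Matrix m m R} {A₂ : Matrix n n R}
    (hcop : IsCoprime (A₁.map (residue R)).charpoly (A₂.map (residue R)).charpoly) :
    Function.Surjective (sylvesterMap A₁ A₂) := by
  rw [← LinearMap.range_eq_top, eq_top_iff]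
  refine Submodule.le_of_le_smul_of_le_jacobson_bot (I := maximalIdeal R) Module.Finite.fg_top
    (maximalIdeal_le_jacobson ⊥) fun X _ => ?_
  obtain ⟨V', hV'⟩ := sylvesterMap_surjective_of_field hcop (X.map (residue R))
  obtain ⟨V, rfl⟩ : ∃ V : Matrix m n R, V.map (residue R) = V' :=
    ⟨V'.map (Function.surjInv residue_surjective), by ext; simp [Function.surjInv_eq]⟩
  have hres : sylvesterMap A₁ A₂ V - X ∈ maximalIdeal R • (⊤ : Submodule R (Matrix m n R)) := by
    have h0 : (sylvesterMap A₁ A₂ V - X).map (residue R) = 0 := by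
      rw [Matrix.map_sub _ (map_sub _), map_sylvesterMap, hV', sub_self]
    exact mem_ideal_smul_top_iff.mpr fun i j =>
      (residue_eq_zero_iff _).mp (congrFun (congrFun h0 i) j)
  simpa only [sub_sub_cancel] using
    Submodule.sub_mem_sup (LinearMap.mem_range_self (sylvesterMap A₁ A₂) V) hres

end Charpoly

theorem exists_sylvesterMap_sub_smul_mul_mul_sub_mem {I : Ideal R} {A₁ : Matrix m m R}
    {A₂ : Matrix n n R} (hL : Function.Surjective (sylvesterMap A₁ A₂)) {π : R} (hπ : π ∈ I)
    (C : Matrix n m R) (B : Matrix m n R) (k : ℕ) :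
    ∃ V : Matrix m n R,
      sylvesterMap A₁ A₂ V - π • (V * C * V) - B ∈ I ^ k • (⊤ : Submodule R (Matrix m n R)) := by
  induction k with
  | zero => exact ⟨0, by simp⟩
  | succ k ih =>
    obtain ⟨V, hV⟩ := ih
    obtain ⟨W, hW, hLW⟩ := Submodule.exists_mem_smul_top_apply_eq_of_surjective hL hV
    have hWmul (D : Matrix n n R) : W * D ∈ I ^ k • (⊤ : Submodule R (Matrix m n R)) :=
      Submodule.smul_top_le_comap_smul_top _ (mulRightLinearMap m R D) hW
    have hmulW (D : Matrix m m R) : D * W ∈ I ^ k • (⊤ : Submodule R (Matrix m n R)) :=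
      Submodule.smul_top_le_comap_smul_top _ (mulLeftLinearMap n R D) hW
    refine ⟨V - W, ?_⟩
    have hexpand : sylvesterMap A₁ A₂ (V - W) - π • ((V - W) * C * (V - W)) - B =
        π • (W * (C * V) + V * C * W - W * (C * W)) := by
      rw [map_sub, hLW]
      simp only [sylvesterMap_apply, Matrix.sub_mul, Matrix.mul_sub, smul_sub, smul_add,
        Matrix.mul_assoc]
      abel
    rw [hexpand, pow_succ', Submodule.mul_smul]
    exact Submodule.smul_mem_smul hπ (sub_mem (add_mem (hWmul _) (hmulW _)) (hWmul _))

end Matrix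

open IsLocalRing in
theorem sylvester_type_surjectivity
    (O : Type*) [CommRing O] [IsDomain O] [IsDiscreteValuationRing O]
    (ℓ : ℕ) (π : O) (hπ : Irreducible π)
    (d₁ d₂ : ℕ)
    (A₁ : Matrix (Fin d₁) (Fin d₁) O) (A₂ : Matrix (Fin d₂) (Fin d₂) O)
    (hcop : IsCoprime ((A₁.map (IsLocalRing.residue O)).charpoly)
                      ((A₂.map (IsLocalRing.residue O)).charpoly))
    (C : Matrix (Fin d₂) (Fin d₁) O) :
    (∀ B : Matrix (Fin d₁) (Fin d₂) O, ∃ V : Matrix (Fin d₁) (Fin d₂) O,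
        ∀ i j, (V * A₂ - A₁ * V - π • (V * C * V) - B) i j ∈
          IsLocalRing.maximalIdeal O ^ (ℓ - 1)) ∧
    (∀ B : Matrix (Fin d₁) (Fin d₂) O, ∃ V : Matrix (Fin d₁) (Fin d₂) O,
        ∀ i j, (B + V * A₂ - A₁ * V - π • (V * C * V)) i j ∈
          IsLocalRing.maximalIdeal O ^ (ℓ - 1)) := by
  have hπm : π ∈ maximalIdeal O := (mem_maximalIdeal π).mpr hπ.not_isUnit
  have solve (B : Matrix (Fin d₁) (Fin d₂) O) : ∃ V : Matrix (Fin d₁) (Fin d₂) O,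
      ∀ i j, (V * A₂ - A₁ * V - π • (V * C * V) - B) i j ∈ maximalIdeal O ^ (ℓ - 1) := by
    obtain ⟨V, hV⟩ := exists_sylvesterMap_sub_smul_mul_mul_sub_mem
      (sylvesterMap_surjective hcop) hπm C B (ℓ - 1)
    exact ⟨V, mem_ideal_smul_top_iff.mp hV⟩
  refine ⟨solve, fun B => ?_⟩
  obtain ⟨V, hV⟩ := solve (-B)
  refine ⟨V, fun i j => ?_⟩
  rw [show B + V * A₂ - A₁ * V - π • (V * C * V) = V * A₂ - A₁ * V - π • (V * C * V) - -B by
    abel]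
  exact hV i j
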